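/- (Exponential–gamma change of variable underlying the working example) For 0 < σ < 1, d ≥ 1, and λ ∈ (0,∞)^d with pairwise distinct entries, ∫_{(0,∞)^d} (1 − e^{−⟨λ,s⟩}) (s₁+⋯+s_d)^{−σ−d} ds = Γ(1−σ)/((σ+1)(σ+2)⋯(σ+d−1)σ) · Σ_{i=1}^d λᵢ^{σ+d−1}/∏_{j≠i}(λᵢ−λⱼ). -/

import Mathlib

open Filter Set MeasureTheory

section aux

lemma expInt' {c : ℝ} (hc : 0 < c) : ∫ x in Ioi (0:ℝ), Real.exp (-(c*x)) = 1/c := by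
  have := Real.integral_rpow_mul_exp_neg_mul_Ioi (a := 1) one_pos hc
  simpa using this

lemma expIntegrable' {c : ℝ} (hc : 0 < c) :
    IntegrableOn (fun x : ℝ => Real.exp (-(c*x))) (Ioi 0) := by
  simpa using exp_neg_integrableOn_Ioi 0 hc

lemma gammaIntegrable' {a c : ℝ} (ha : 0 < a) (hc : 0 < c) :
    IntegrableOn (fun x : ℝ => x ^ (a-1) * Real.exp (-(c*x))) (Ioi 0) := by
  have := integrableOn_rpow_mul_exp_neg_mul_rpow (s := a-1) (p := 1) (b := c)
    (by linarith) one_pos hc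
  simpa [Real.rpow_one] using this

end aux

section mellin
variable {σ lam : ℝ} (h0 : 0 < σ) (h1 : σ < 1) (hl : 0 < lam)

private noncomputable def Fm (σ lam : ℝ) : ℝ → ℝ → ℝ :=
  fun t u => t ^ (σ-1) * Real.exp (-(t*u)) * Real.exp (-(lam*u))

include h0 h1 hl in
lemma Fm_int : Integrable (Function.uncurry (Fm σ lam))
    ((volume.restrict (Ioi 0)).prod (volume.restrict (Ioi 0))) := by
  rw [integrable_prod_iff']
  · constructor
    · filter_upwards [ae_restrict_mem measurableSet_Ioi] with u hu
      have : (fun t => Fm σ lam t u) =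
          fun t => (t ^ (σ-1) * Real.exp (-(u*t))) * Real.exp (-(lam*u)) := by
        funext t; simp [Fm, mul_comm t u]
      have e2 : (fun x => Function.uncurry (Fm σ lam) (x, u)) = fun t => Fm σ lam t u := rfl
      rw [e2, this]
      exact (gammaIntegrable' h0 hu).mul_const _
    · have key : ∀ u ∈ Ioi (0:ℝ),
          (∫ t in Ioi (0:ℝ), ‖Fm σ lam t u‖) =
            Real.Gamma σ * (u ^ ((1-σ)-1) * Real.exp (-(lam*u))) := by
        intro u hu
        have h1' : (∫ t in Ioi (0:ℝ), ‖Fm σ lam t u‖) =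
            ∫ t in Ioi (0:ℝ), (t ^ (σ-1) * Real.exp (-(u*t))) * Real.exp (-(lam*u)) := by
          refine setIntegral_congr_fun measurableSet_Ioi (fun t ht => ?_)
          have htp : (0:ℝ) < t := ht
          have : 0 ≤ Fm σ lam t u := by
            unfold Fm; positivity
          rw [Real.norm_eq_abs, abs_of_nonneg this]
          simp [Fm, mul_comm t u]
        rw [h1', integral_mul_const, Real.integral_rpow_mul_exp_neg_mul_Ioi h0 hu]
        have : ((1:ℝ)/u) ^ σ = u ^ ((1-σ)-1) := by
          rw [show (1-σ)-1 = -σ by ring, Real.rpow_neg hu.le, one_div, Real.inv_rpow hu.le]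
        rw [this]; ring
      have : IntegrableOn
          (fun u => Real.Gamma σ * (u ^ ((1-σ)-1) * Real.exp (-(lam*u)))) (Ioi (0:ℝ)) :=
        (gammaIntegrable' (by linarith) hl).const_mul _
      exact this.congr_fun (fun u hu => (key u hu).symm) measurableSet_Ioi
  · apply Measurable.aestronglyMeasurable
    unfold Function.uncurry Fm
    fun_prop

include h0 h1 hl in
lemma mellin_eval : ∫ t in Ioi (0:ℝ), t ^ (σ-1) / (t + lam)
    = lam ^ (σ-1) * (Real.Gamma σ * Real.Gamma (1-σ)) := by
  have hswap := integral_integral_swap (Fm_int h0 h1 hl)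
  have hL : (∫ t in Ioi (0:ℝ), ∫ u in Ioi (0:ℝ), Fm σ lam t u)
      = ∫ t in Ioi (0:ℝ), t ^ (σ-1) / (t + lam) := by
    refine setIntegral_congr_fun measurableSet_Ioi (fun t ht => ?_)
    have htp : (0:ℝ) < t := ht
    have : (fun u => Fm σ lam t u) = fun u => t ^ (σ-1) * Real.exp (-((t+lam)*u)) := by
      funext u; rw [Fm, mul_assoc, ← Real.exp_add]; ring_nf
    rw [this, integral_const_mul, expInt' (by linarith)]
    field_simp
  have hR : (∫ u in Ioi (0:ℝ), ∫ t in Ioi (0:ℝ), Fm σ lam t u)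
      = lam ^ (σ-1) * (Real.Gamma σ * Real.Gamma (1-σ)) := by
    have step : (∫ u in Ioi (0:ℝ), ∫ t in Ioi (0:ℝ), Fm σ lam t u)
        = ∫ u in Ioi (0:ℝ), Real.Gamma σ * (u ^ ((1-σ)-1) * Real.exp (-(lam*u))) := by
      refine setIntegral_congr_fun measurableSet_Ioi (fun u hu => ?_)
      have hup : (0:ℝ) < u := hu
      have : (fun t => Fm σ lam t u) =
          fun t => (t ^ (σ-1) * Real.exp (-(u*t))) * Real.exp (-(lam*u)) := by
        funext t; simp [Fm, mul_comm t u]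
      rw [this, integral_mul_const, Real.integral_rpow_mul_exp_neg_mul_Ioi h0 hup]
      have : ((1:ℝ)/u) ^ σ = u ^ ((1-σ)-1) := by
        rw [show (1-σ)-1 = -σ by ring, Real.rpow_neg hup.le, one_div, Real.inv_rpow hup.le]
      rw [this]; ring
    rw [step, integral_const_mul, Real.integral_rpow_mul_exp_neg_mul_Ioi (by linarith) hl]
    have : ((1:ℝ)/lam) ^ (1-σ) = lam ^ (σ-1) := by
      rw [show σ-1 = -(1-σ) by ring, Real.rpow_neg hl.le, one_div, Real.inv_rpow hl.le]
    rw [this]; ring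
  rw [← hL, hswap, hR]

include h0 h1 hl in
lemma mellin_integrable :
    IntegrableOn (fun t : ℝ => t ^ (σ-1) / (t + lam)) (Ioi 0) := by
  have h := (Fm_int h0 h1 hl).integral_prod_left
  refine h.congr ?_
  filter_upwards [ae_restrict_mem measurableSet_Ioi] with t ht
  have htp : (0:ℝ) < t := ht
  have : (fun u => Fm σ lam t u) = fun u => t ^ (σ-1) * Real.exp (-((t+lam)*u)) := by
    funext u; rw [Fm, mul_assoc, ← Real.exp_add]; ring_nf
  show (∫ u in Ioi (0:ℝ), Fm σ lam t u) = _
  rw [this, integral_const_mul, expInt' (by linarith)]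
  field_simp
end mellin

section pf
open Polynomial

lemma partialFrac (d : ℕ) (hd : 1 ≤ d) (lam : Fin d → ℝ)
    (hinj : Function.Injective lam) (t : ℝ) (ht : ∀ i, t + lam i ≠ 0) :
    1 - t^d * (∏ i, (t + lam i))⁻¹
      = ∑ k, lam k ^ d / ((t + lam k) * ∏ j ∈ Finset.univ.erase k, (lam k - lam j)) := by
  classical
  set v : Fin d → ℝ := fun k => -lam k with hv
  have hvinj : Function.Injective v := fun a b h => hinj (by simpa [hv] using h)
  have hcard : (Finset.univ : Finset (Fin d)).card = d := by simp
  set g : ℝ[X] := X^d - Lagrange.nodal Finset.univ v with hg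
  have hdeg : g.degree < (Finset.univ : Finset (Fin d)).card := by
    rw [hg, hcard]
    have h1 : (X^d : ℝ[X]).degree = (d : ℕ) := degree_X_pow d
    have h2 : (Lagrange.nodal Finset.univ v).degree = (d : ℕ) := by
      rw [Lagrange.degree_nodal, hcard]
    have := degree_sub_lt (h1.trans h2.symm) (by
      intro h; simp [h] at h1) (by
      rw [monic_X_pow d |>.leadingCoeff, (Lagrange.nodal_monic).leadingCoeff])
    rw [h1] at this
    exact_mod_cast this
  have hinterp := Lagrange.eq_interpolate (f := g) (hvinj.injOn) hdeg
  have hevalg : ∀ k, g.eval (v k) = (-lam k)^d := by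
    intro k
    rw [hg, eval_sub, eval_pow, eval_X, Lagrange.eval_nodal_at_node (Finset.mem_univ k),
      sub_zero, hv]
  have key := congrArg (Polynomial.eval t) hinterp
  rw [Lagrange.interpolate_apply] at key
  simp only [eval_finset_sum, eval_mul, eval_C] at key
  have hbasis : ∀ k, Polynomial.eval t (Lagrange.basis Finset.univ v k)
      = ∏ j ∈ Finset.univ.erase k, ((v k - v j)⁻¹ * (t - v j)) := by
    intro k
    rw [Lagrange.basis, eval_prod]
    refine Finset.prod_congr rfl (fun j _ => ?_)
    simp [Lagrange.basisDivisor]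
  have hevalgt : g.eval t = t^d - ∏ i, (t + lam i) := by
    simp [hg, Lagrange.eval_nodal, hv, sub_neg_eq_add]
  rw [hevalgt] at key
  have hterm : ∀ k, Polynomial.eval (v k) g * Polynomial.eval t (Lagrange.basis Finset.univ v k)
      = - (lam k ^ d * (∏ j ∈ Finset.univ.erase k, (lam k - lam j))⁻¹
            * ∏ j ∈ Finset.univ.erase k, (t + lam j)) := by
    intro k
    rw [hevalg, hbasis]
    have hce : (Finset.univ.erase k).card = d - 1 := by
      rw [Finset.card_erase_of_mem (Finset.mem_univ k), hcard]
    rw [Finset.prod_mul_distrib]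
    have e1 : ∏ j ∈ Finset.univ.erase k, (v k - v j)⁻¹
        = (-1:ℝ)^(d-1) * (∏ j ∈ Finset.univ.erase k, (lam k - lam j))⁻¹ := by
      have estep : ∀ j ∈ Finset.univ.erase k, (v k - v j)⁻¹ = (-1) * (lam k - lam j)⁻¹ := by
        intro j _
        rw [show v k - v j = -(lam k - lam j) by rw [hv]; ring, inv_neg]; ring
      rw [Finset.prod_congr rfl estep, Finset.prod_mul_distrib, Finset.prod_const, hce,
        Finset.prod_inv_distrib]
    have e2 : ∏ j ∈ Finset.univ.erase k, (t - v j)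
        = ∏ j ∈ Finset.univ.erase k, (t + lam j) := by
      refine Finset.prod_congr rfl (fun j _ => ?_); rw [hv]; ring
    rw [e1, e2, neg_pow]
    have hpow : (-1:ℝ)^d * (-1:ℝ)^(d-1) = -1 := by
      rw [← pow_add, show d + (d-1) = 2*(d-1)+1 from by omega, pow_succ, pow_mul]
      norm_num
    linear_combination (lam k ^ d * (∏ j ∈ Finset.univ.erase k, (lam k - lam j))⁻¹
      * ∏ j ∈ Finset.univ.erase k, (t + lam j)) * hpow
  rw [Finset.sum_congr rfl (fun k _ => hterm k), Finset.sum_neg_distrib] at key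
  have hP : (∏ i, (t + lam i)) ≠ 0 := Finset.prod_ne_zero_iff.mpr (fun i _ => ht i)
  have hkey2 : (∏ i, (t + lam i)) - t^d
      = ∑ k, lam k ^ d * (∏ j ∈ Finset.univ.erase k, (lam k - lam j))⁻¹
          * ∏ j ∈ Finset.univ.erase k, (t + lam j) := by linarith [key]
  have expand : 1 - t^d * (∏ i, (t + lam i))⁻¹
      = ((∏ i, (t + lam i)) - t^d) * (∏ i, (t + lam i))⁻¹ := by
    field_simp
  rw [expand, hkey2, Finset.sum_mul]
  refine Finset.sum_congr rfl (fun k _ => ?_)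
  have hsplit : (∏ i, (t + lam i)) = (t + lam k) * ∏ j ∈ Finset.univ.erase k, (t + lam j) :=
    (Finset.mul_prod_erase _ _ (Finset.mem_univ k)).symm
  have hB : (∏ j ∈ Finset.univ.erase k, (t + lam j)) ≠ 0 :=
    Finset.prod_ne_zero_iff.mpr (fun j _ => ht j)
  rw [hsplit, mul_inv, div_eq_mul_inv, mul_inv]
  linear_combination (lam k ^ d * (∏ j ∈ Finset.univ.erase k, (lam k - lam j))⁻¹
    * (t + lam k)⁻¹) * (mul_inv_cancel₀ hB)
end pf

section orthant

lemma orthant_eq (d : ℕ) : {s : Fin d → ℝ | ∀ i, 0 < s i}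
    = Set.univ.pi (fun _ : Fin d => Ioi (0:ℝ)) := by
  ext s; simp [Set.mem_univ_pi, mem_Ioi]

lemma orthant_meas (d : ℕ) : MeasurableSet {s : Fin d → ℝ | ∀ i, 0 < s i} := by
  rw [orthant_eq]; exact MeasurableSet.univ_pi (fun _ => measurableSet_Ioi)

lemma indicator_prod (d : ℕ) (f : Fin d → ℝ → ℝ) (s : Fin d → ℝ) :
    ∏ i, (Ioi (0:ℝ)).indicator (f i) (s i)
      = ({s : Fin d → ℝ | ∀ i, 0 < s i}).indicator (fun x => ∏ i, f i (x i)) s := by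
  by_cases hs : ∀ i, 0 < s i
  · rw [Set.indicator_of_mem (show s ∈ {s : Fin d → ℝ | ∀ i, 0 < s i} from hs)]
    exact Finset.prod_congr rfl (fun i _ => Set.indicator_of_mem (hs i) _)
  · push_neg at hs
    obtain ⟨i, hi⟩ := hs
    rw [Set.indicator_of_notMem (by simp only [mem_setOf_eq]; push_neg; exact ⟨i, hi⟩)]
    refine Finset.prod_eq_zero (Finset.mem_univ i) ?_
    exact Set.indicator_of_notMem (by simpa using hi) _

lemma orthantExp_integral (d : ℕ) (c : Fin d → ℝ) (hc : ∀ i, 0 < c i) :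
    ∫ s in {s : Fin d → ℝ | ∀ i, 0 < s i}, Real.exp (-∑ i, c i * s i)
      = ∏ i, (c i)⁻¹ := by
  have h1 : (fun s : Fin d → ℝ => Real.exp (-∑ i, c i * s i))
      = fun s => ∏ i, Real.exp (-(c i * s i)) := by
    funext s
    rw [← Real.exp_sum]
    congr 1
    rw [← Finset.sum_neg_distrib]
  rw [h1, ← integral_indicator (orthant_meas d)]
  have h2 : ({s : Fin d → ℝ | ∀ i, 0 < s i}).indicator
        (fun x : Fin d → ℝ => ∏ i, Real.exp (-(c i * x i)))
      = fun s => ∏ i, (Ioi (0:ℝ)).indicator (fun x => Real.exp (-(c i * x))) (s i) := by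
    funext s; rw [indicator_prod]
  rw [h2, MeasureTheory.integral_fintype_prod_volume_eq_prod
    (f := fun i => (Ioi (0:ℝ)).indicator (fun x => Real.exp (-(c i * x))))]
  refine Finset.prod_congr rfl (fun i _ => ?_)
  rw [integral_indicator measurableSet_Ioi, expInt' (hc i), one_div]

lemma orthantExp_integrable (d : ℕ) (c : Fin d → ℝ) (hc : ∀ i, 0 < c i) :
    IntegrableOn (fun s : Fin d → ℝ => Real.exp (-∑ i, c i * s i))
      {s : Fin d → ℝ | ∀ i, 0 < s i} := by
  have h1 : (fun s : Fin d → ℝ => Real.exp (-∑ i, c i * s i))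
      = fun s => ∏ i, Real.exp (-(c i * s i)) := by
    funext s
    rw [← Real.exp_sum]
    congr 1
    rw [← Finset.sum_neg_distrib]
  have h2 : ({s : Fin d → ℝ | ∀ i, 0 < s i}).indicator
        (fun x : Fin d → ℝ => ∏ i, Real.exp (-(c i * x i)))
      = fun s => ∏ i, (Ioi (0:ℝ)).indicator (fun x => Real.exp (-(c i * x))) (s i) := by
    funext s; rw [indicator_prod]
  have h3 : Integrable (({s : Fin d → ℝ | ∀ i, 0 < s i}).indicator
      (fun x : Fin d → ℝ => ∏ i, Real.exp (-(c i * x i)))) := by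
    rw [h2]
    exact MeasureTheory.Integrable.fintype_prod (𝕜 := ℝ)
      (fun i => (integrable_indicator_iff measurableSet_Ioi).mpr (expIntegrable' (hc i)))
  have h5 := (integrable_indicator_iff (orthant_meas d)).mp h3
  rw [h1]
  exact h5

end orthant

section kernel
variable {d : ℕ} {σ : ℝ} (lam : Fin d → ℝ)

private noncomputable def K (σ : ℝ) (d : ℕ) (lam : Fin d → ℝ) :
    (Fin d → ℝ) → ℝ → ℝ :=
  fun s t => (1 - Real.exp (-∑ i, lam i * s i)) *
    (t ^ (σ + (d:ℝ) - 1) * Real.exp (-(t * ∑ i, s i)))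

lemma K_pointEq (t : ℝ) (s : Fin d → ℝ) :
    K σ d lam s t = t ^ (σ + (d:ℝ) - 1) *
      (Real.exp (-∑ i, t * s i) - Real.exp (-∑ i, (t + lam i) * s i)) := by
  have e1 : t * ∑ i, s i = ∑ i, t * s i := Finset.mul_sum _ _ _
  have e2 : ∑ i, (t + lam i) * s i = (∑ i, lam i * s i) + ∑ i, t * s i := by
    rw [← Finset.sum_add_distrib]
    exact Finset.sum_congr rfl (fun i _ => by ring)
  rw [K, e1, e2, neg_add, Real.exp_add]
  ring

lemma K_meas : Measurable (Function.uncurry (K σ d lam)) := by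
  unfold Function.uncurry K
  fun_prop

end kernel

/-- Exponential–gamma change of variable underlying the working example:
∫_{(0,∞)^d}(1−e^{−⟨λ,s⟩})(s₁+⋯+s_d)^{−σ−d}ds
 = Γ(1−σ)/((σ+1)⋯(σ+d−1)σ) · Σᵢ λᵢ^{σ+d−1}/∏_{j≠i}(λᵢ−λⱼ). -/
theorem corm_change_of_variable (d : ℕ) (hd : 1 ≤ d) (σ : ℝ)
    (hσ0 : 0 < σ) (hσ1 : σ < 1)
    (lam : Fin d → ℝ) (hpos : ∀ i, 0 < lam i)
    (hdist : ∀ i j, i ≠ j → lam i ≠ lam j) :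
    ∫ s in {s : Fin d → ℝ | ∀ i, 0 < s i},
        (1 - Real.exp (-∑ i, lam i * s i)) * (∑ i, s i) ^ (-(σ + (d:ℝ)))
      = Real.Gamma (1 - σ) / ((∏ k ∈ Finset.range (d-1), (σ + (k+1))) * σ) *
          ∑ i, (lam i) ^ (σ + (d:ℝ) - 1) /
            ∏ j ∈ Finset.univ.erase i, (lam i - lam j) := by
  classical
  have hne : Nonempty (Fin d) := ⟨⟨0, hd⟩⟩
  have hinj : Function.Injective lam := fun a b h => by
    by_contra hab; exact hdist a b hab h
  have hD : ∀ k, (∏ j ∈ Finset.univ.erase k, (lam k - lam j)) ≠ 0 := fun k =>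
    Finset.prod_ne_zero_iff.mpr (fun j hj =>
      sub_ne_zero.mpr (hdist k j (Ne.symm (Finset.mem_erase.mp hj).1)))
  set S := {s : Fin d → ℝ | ∀ i, 0 < s i} with hS
  set G : ℝ → ℝ := fun t => ∑ k, (lam k ^ d / (∏ j ∈ Finset.univ.erase k, (lam k - lam j)))
      * (t ^ (σ - 1) / (t + lam k)) with hG
  -- inner s-integral for fixed t > 0
  have inner_int : ∀ t : ℝ, 0 < t →
      (∫ s in S, K σ d lam s t) = G t := by
    intro t ht
    have hstep : (∫ s in S, K σ d lam s t)
        = t ^ (σ + (d:ℝ) - 1) * ((∫ s in S, Real.exp (-∑ i, t * s i))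
            - ∫ s in S, Real.exp (-∑ i, (t + lam i) * s i)) := by
      rw [← integral_sub (orthantExp_integrable d (fun _ => t) (fun _ => ht))
        (orthantExp_integrable d (fun i => t + lam i) (fun i => by have h1 := hpos i; show (0:ℝ) < t + lam i; linarith)),
        ← integral_const_mul]
      exact setIntegral_congr_fun (orthant_meas d) (fun s _ => K_pointEq lam t s)
    rw [hstep, orthantExp_integral d (fun _ => t) (fun _ => ht),
      orthantExp_integral d (fun i => t + lam i) (fun i => by have h1 := hpos i; show (0:ℝ) < t + lam i; linarith)]
    have hconst : (∏ _i : Fin d, t⁻¹) = (t⁻¹)^d := by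
      rw [Finset.prod_const, Finset.card_univ, Fintype.card_fin]
    rw [hconst]
    have hsub : (t⁻¹)^d - ∏ i, (t + lam i)⁻¹
        = (t⁻¹)^d * (1 - t^d * (∏ i, (t + lam i))⁻¹) := by
      rw [mul_sub, mul_one, ← mul_assoc, ← mul_pow, inv_mul_cancel₀ ht.ne', one_pow, one_mul,
        Finset.prod_inv_distrib]
    have hpow : t ^ (σ + (d:ℝ) - 1) * (t⁻¹)^d = t ^ (σ - 1) := by
      rw [inv_pow, ← Real.rpow_natCast t d, ← Real.rpow_neg ht.le, ← Real.rpow_add ht]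
      congr 1; ring
    rw [hsub, ← mul_assoc, hpow,
      partialFrac d hd lam hinj t (fun i => by have := hpos i; positivity), Finset.mul_sum, hG]
    refine Finset.sum_congr rfl (fun k _ => ?_)
    rw [div_eq_mul_inv (lam k ^ d), mul_inv, div_eq_mul_inv (t ^ (σ-1)),
      div_eq_mul_inv (lam k ^ d)]
    ring
  -- integrability of G on Ioi 0
  have G_integrable : IntegrableOn G (Ioi (0:ℝ)) := by
    rw [hG]
    apply integrable_finset_sum
    intro k _
    exact ((mellin_integrable hσ0 hσ1 (hpos k)).const_mul _)
  -- value of ∫ G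
  have G_integral : (∫ t in Ioi (0:ℝ), G t)
      = ∑ k, (lam k ^ d / (∏ j ∈ Finset.univ.erase k, (lam k - lam j)))
          * (lam k ^ (σ - 1) * (Real.Gamma σ * Real.Gamma (1 - σ))) := by
    rw [hG, integral_finset_sum _
      (fun k _ => (mellin_integrable hσ0 hσ1 (hpos k)).const_mul _)]
    refine Finset.sum_congr rfl (fun k _ => ?_)
    rw [integral_const_mul, mellin_eval hσ0 hσ1 (hpos k)]
  -- Fubini integrability of K on product
  have K_int : Integrable (Function.uncurry (K σ d lam))
      ((volume.restrict S).prod (volume.restrict (Ioi 0))) := by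
    rw [integrable_prod_iff' (K_meas lam).aestronglyMeasurable]
    constructor
    · filter_upwards [ae_restrict_mem measurableSet_Ioi] with t ht
      have e0 : (fun s => Function.uncurry (K σ d lam) (s, t)) = fun s => K σ d lam s t := rfl
      have e1 : (fun s : Fin d → ℝ => K σ d lam s t) = fun s => t ^ (σ + (d:ℝ) - 1) *
          (Real.exp (-∑ i, t * s i) - Real.exp (-∑ i, (t + lam i) * s i)) := by
        funext s; exact K_pointEq lam t s
      rw [e0, e1]
      have htp : (0:ℝ) < t := ht
      exact (((orthantExp_integrable d (fun _ => t) (fun _ => htp)).sub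
        (orthantExp_integrable d (fun i => t + lam i)
          (fun i => by have h1 := hpos i; show (0:ℝ) < t + lam i; linarith))).const_mul _)
    · refine G_integrable.congr ?_
      filter_upwards [ae_restrict_mem measurableSet_Ioi] with t ht
      have hnorm : (∫ s in S, ‖K σ d lam s t‖) = ∫ s in S, K σ d lam s t := by
        refine setIntegral_congr_fun (orthant_meas d) (fun s hs => ?_)
        have hse : ∀ i, 0 < s i := hs
        have h1 : 0 ≤ 1 - Real.exp (-∑ i, lam i * s i) := by
          have : Real.exp (-∑ i, lam i * s i) ≤ 1 := by
            rw [Real.exp_le_one_iff, neg_nonpos]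
            exact Finset.sum_nonneg (fun i _ => le_of_lt (mul_pos (hpos i) (hse i)))
          linarith
        have h2 : (0:ℝ) ≤ t ^ (σ + (d:ℝ) - 1) := Real.rpow_nonneg (le_of_lt ht) _
        have hK : 0 ≤ K σ d lam s t := by
          show (0:ℝ) ≤ (1 - Real.exp (-∑ i, lam i * s i)) *
            (t ^ (σ + (d:ℝ) - 1) * Real.exp (-(t * ∑ i, s i)))
          exact mul_nonneg h1 (mul_nonneg h2 (Real.exp_pos _).le)
        rw [Real.norm_eq_abs, abs_of_nonneg hK]
      exact (hnorm.trans (inner_int t ht)).symm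
  -- pointwise Gamma representation on S
  have hΓpos : 0 < Real.Gamma (σ + d) := Real.Gamma_pos_of_pos (by positivity)
  have point : ∀ s ∈ S,
      (1 - Real.exp (-∑ i, lam i * s i)) * (∑ i, s i) ^ (-(σ + (d:ℝ)))
        = (Real.Gamma (σ + d))⁻¹ * ∫ t in Ioi (0:ℝ), K σ d lam s t := by
    intro s hs
    have hse : ∀ i, 0 < s i := hs
    have hsum : 0 < ∑ i, s i :=
      Finset.sum_pos (fun i _ => hse i) Finset.univ_nonempty
    have hKint : (∫ t in Ioi (0:ℝ), K σ d lam s t)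
        = (1 - Real.exp (-∑ i, lam i * s i)) *
            ((1 / (∑ i, s i)) ^ (σ + (d:ℝ)) * Real.Gamma (σ + d)) := by
      simp only [K]
      rw [integral_const_mul]
      congr 1
      have e : (fun t : ℝ => t ^ (σ + (d:ℝ) - 1) * Real.exp (-(t * ∑ i, s i)))
          = fun t => t ^ ((σ + (d:ℝ)) - 1) * Real.exp (-((∑ i, s i) * t)) := by
        funext t; rw [mul_comm t]
      rw [e, Real.integral_rpow_mul_exp_neg_mul_Ioi (by positivity) hsum]
    rw [hKint]
    have hpw : ((1:ℝ) / (∑ i, s i)) ^ (σ + (d:ℝ)) = (∑ i, s i) ^ (-(σ + (d:ℝ))) := by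
      rw [Real.rpow_neg hsum.le, one_div, Real.inv_rpow hsum.le]
    rw [hpw]
    field_simp
  -- main computation
  have hswap := integral_integral_swap K_int
  have main : (∫ s in S, (1 - Real.exp (-∑ i, lam i * s i)) * (∑ i, s i) ^ (-(σ + (d:ℝ))))
      = (Real.Gamma (σ + d))⁻¹ * ∫ t in Ioi (0:ℝ), G t := by
    rw [setIntegral_congr_fun (orthant_meas d) point, integral_const_mul]
    congr 1
    rw [hswap]
    exact setIntegral_congr_fun measurableSet_Ioi (fun t ht => inner_int t ht)
  rw [main, G_integral]
  -- final algebra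
  have gamma_prod : ∀ n : ℕ, Real.Gamma (σ + n)
      = (∏ k ∈ Finset.range n, (σ + k)) * Real.Gamma σ := by
    intro n
    induction n with
    | zero => simp
    | succ m ih =>
      have : σ + ((m+1 : ℕ) : ℝ) = (σ + m) + 1 := by push_cast; ring
      rw [this, Real.Gamma_add_one (by positivity), ih, Finset.prod_range_succ]
      push_cast; ring
  have hPd : (∏ k ∈ Finset.range d, (σ + k))
      = (∏ k ∈ Finset.range (d-1), (σ + ((k:ℝ)+1))) * σ := by
    conv_lhs => rw [show d = (d-1)+1 from by omega]
    rw [Finset.prod_range_succ']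
    congr 1
    · exact Finset.prod_congr rfl (fun x _ => by push_cast; ring)
    · norm_num
  have hPne : (∏ k ∈ Finset.range d, (σ + k)) ≠ 0 :=
    Finset.prod_ne_zero_iff.mpr (fun k _ => by positivity)
  have hΓσ : Real.Gamma σ ≠ 0 := (Real.Gamma_pos_of_pos hσ0).ne'
  rw [gamma_prod d, Finset.mul_sum, Finset.mul_sum]
  refine Finset.sum_congr rfl (fun k _ => ?_)
  have hlpow : lam k ^ (σ + (d:ℝ) - 1) = lam k ^ (d:ℕ) * lam k ^ (σ - 1) := by
    rw [← Real.rpow_natCast (lam k) d, ← Real.rpow_add (hpos k)]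
    congr 1; ring
  rw [hlpow, ← hPd, mul_inv, div_eq_mul_inv (lam k ^ (d:ℕ)),
    div_eq_mul_inv (lam k ^ (d:ℕ) * lam k ^ (σ-1)),
    div_eq_mul_inv (Real.Gamma (1-σ))]
  linear_combination ((∏ k ∈ Finset.range d, (σ + (k:ℝ)))⁻¹ * lam k ^ (d:ℕ)
    * (∏ j ∈ Finset.univ.erase k, (lam k - lam j))⁻¹ * lam k ^ (σ-1)
    * Real.Gamma (1-σ)) * (inv_mul_cancel₀ hΓσ)
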